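/- Let K = ∑_ω √γ(ω) A(ω) where A(ω) = ∑_{λ_i − λ_j = ω} |ψ_i⟩⟨ψ_i| A |ψ_j⟩⟨ψ_j| and A is a random Hermitian matrix with E[A_{ij}A_{kl}] = 0 for (i,j) ≠ (l,k) and E|A_{ij}|² = s² for i ≠ j. Then the averaged Lindbladian E[ℒ_K] ρ = E[KρK† − ½{K†K, ρ}] equals the Davies generator ∑_ω γ(ω) E[A(ω) ρ A(ω)† − ½{A(ω)† A(ω), ρ}]: i.e., all cross-terms between distinct Bohr frequencies ω ≠ ω′ vanish in expectation. -/

import Mathlib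

open Matrix MeasureTheory Finset

attribute [local instance] Matrix.frobeniusNormedAddCommGroup Matrix.frobeniusNormedSpace

variable {N : ℕ}

/-- The single-jump Lindblad dissipator `ℒ_K ρ = KρK† − ½{K†K, ρ}`. -/
noncomputable def dissipator (K ρ : Matrix (Fin N) (Fin N) ℂ) :
    Matrix (Fin N) (Fin N) ℂ :=
  K * ρ * Kᴴ - (1 / 2 : ℂ) • (Kᴴ * K * ρ + ρ * (Kᴴ * K))

/-- The weighted jump `K = ∑_ω √γ(ω) A(ω)`, written entrywise in the eigenbasis of `H`:
`K_{ij} = √γ(λ_i − λ_j) A_{ij}`. -/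
noncomputable def weightedJump (lam : Fin N → ℝ) (γ : ℝ → ℝ)
    (A : Matrix (Fin N) (Fin N) ℂ) : Matrix (Fin N) (Fin N) ℂ :=
  Matrix.of fun i j => (Real.sqrt (γ (lam i - lam j)) : ℂ) * A i j

/-- The restriction `A(ω) = ∑_{λ_i−λ_j=ω} |ψ_i⟩⟨ψ_i| A |ψ_j⟩⟨ψ_j|` of `A` to Bohr
frequency `ω`, in the eigenbasis of `H`. -/
noncomputable def bohrRestrict (lam : Fin N → ℝ) (ω0 : ℝ)
    (A : Matrix (Fin N) (Fin N) ℂ) : Matrix (Fin N) (Fin N) ℂ :=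
  Matrix.of fun i j => if lam i - lam j = ω0 then A i j else 0

/-! Expanding `K = ∑_ω √γ(ω) A(ω)` writes `ℒ_K` as `∑_{ω,ω'} √(γ(ω)γ(ω')) ℒ_{ω,ω'}` with bilinear
cross terms `ℒ_{ω,ω'}`. For Hermitian `A` one has `A(ω')† = A(-ω')`, so every cross term is
built from sandwiches `A(α) Q A(β)` with `α + β = ω - ω'`. The entries of such a sandwich are
combinations of `A_{pa} A_{bq}` with `λ_p - λ_a = α`, `λ_b - λ_q = β`; by the second-moment
hypothesis these have mean zero unless `(p, a) = (q, b)`, which forces `α + β = 0`. Hence only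
the diagonal terms `ω = ω'` survive, with weight `γ(ω)`. -/

/- The topology induced by the Frobenius norm is not defeq to `Matrix`'s product topology
instance, so integrability of matrix-valued maps is stated for the former. -/
noncomputable local instance {m n 𝕜 : Type*} [Fintype m] [Fintype n] [RCLike 𝕜] :
    TopologicalSpace (Matrix m n 𝕜) :=
  Matrix.frobeniusNormedAddCommGroup.toUniformSpace.toTopologicalSpace

section MatrixIntegral

variable {Ω : Type*} [MeasurableSpace Ω] {μ : Measure Ω} {l m n 𝕜 : Type*}
  [Fintype l] [Fintype m] [Fintype n] [RCLike 𝕜] {F : Ω → Matrix m n 𝕜}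

theorem integrable_matrix_of_integrable_apply [DecidableEq m] [DecidableEq n]
    (hF : ∀ i j, Integrable (fun ω => F ω i j) μ) : Integrable F μ := by
  have hsum : F = fun ω => ∑ i, ∑ j, F ω i j • Matrix.single i j (1 : 𝕜) :=
    funext fun ω => by simpa using Matrix.matrix_eq_sum_single (F ω)
  rw [hsum]
  exact integrable_finsetSum _ fun i _ => integrable_finsetSum _ fun j _ =>
    (hF i j).smul_const _

theorem integral_matrix_apply (hF : Integrable F μ) (i : m) (j : n) :
    (∫ ω, F ω ∂μ) i j = ∫ ω, F ω i j ∂μ :=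
  ((entryLinearMap 𝕜 𝕜 i j).toContinuousLinearMap.integral_comp_comm hF).symm

theorem MeasureTheory.Integrable.const_matrix_mul (P : Matrix l m 𝕜) (hF : Integrable F μ) :
    Integrable (fun ω => P * F ω) μ :=
  (mulLeftLinearMap n 𝕜 P).toContinuousLinearMap.integrable_comp hF

theorem MeasureTheory.Integrable.matrix_mul_const (P : Matrix n l 𝕜) (hF : Integrable F μ) :
    Integrable (fun ω => F ω * P) μ :=
  (mulRightLinearMap m 𝕜 P).toContinuousLinearMap.integrable_comp hF

theorem integral_const_matrix_mul (P : Matrix l m 𝕜) (hF : Integrable F μ) :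
    ∫ ω, P * F ω ∂μ = P * ∫ ω, F ω ∂μ :=
  (mulLeftLinearMap n 𝕜 P).toContinuousLinearMap.integral_comp_comm hF

theorem integral_matrix_mul_const (P : Matrix n l 𝕜) (hF : Integrable F μ) :
    ∫ ω, F ω * P ∂μ = (∫ ω, F ω ∂μ) * P :=
  (mulRightLinearMap m 𝕜 P).toContinuousLinearMap.integral_comp_comm hF

end MatrixIntegral

noncomputable def crossDissipator (K L ρ : Matrix (Fin N) (Fin N) ℂ) : Matrix (Fin N) (Fin N) ℂ :=
  K * ρ * Lᴴ - (1 / 2 : ℂ) • (Lᴴ * K * ρ + ρ * (Lᴴ * K))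

theorem crossDissipator_self (K ρ : Matrix (Fin N) (Fin N) ℂ) :
    crossDissipator K K ρ = dissipator K ρ :=
  rfl

theorem dissipator_sum_smul {ι : Type*} (s : Finset ι) (c : ι → ℝ)
    (B : ι → Matrix (Fin N) (Fin N) ℂ) (ρ : Matrix (Fin N) (Fin N) ℂ) :
    dissipator (∑ i ∈ s, (c i : ℂ) • B i) ρ
      = ∑ i ∈ s, ∑ j ∈ s, ((c i : ℂ) * c j) • crossDissipator (B i) (B j) ρ := by
  simp only [dissipator, crossDissipator, conjTranspose_sum, conjTranspose_smul,
    Complex.star_def, Complex.conj_ofReal, Finset.sum_mul, Finset.mul_sum, Matrix.smul_mul,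
    Matrix.mul_smul, smul_smul, smul_sub, smul_add, Finset.smul_sum, Finset.sum_sub_distrib,
    Finset.sum_add_distrib]
  rw [Finset.sum_comm]
  simp only [mul_comm]

theorem weightedJump_eq_sum_bohrRestrict (lam : Fin N → ℝ) (γ : ℝ → ℝ)
    (M : Matrix (Fin N) (Fin N) ℂ) :
    weightedJump lam γ M
      = ∑ ω0 ∈ Finset.image (fun p : Fin N × Fin N => lam p.1 - lam p.2) Finset.univ,
          (Real.sqrt (γ ω0) : ℂ) • bohrRestrict lam ω0 M := by
  ext i j
  have hmem : lam i - lam j ∈ Finset.image (fun p : Fin N × Fin N => lam p.1 - lam p.2)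
      Finset.univ := Finset.mem_image_of_mem _ (Finset.mem_univ (i, j))
  simp [weightedJump, bohrRestrict, Matrix.sum_apply, hmem]

theorem conjTranspose_bohrRestrict (lam : Fin N → ℝ) (ω0 : ℝ) {M : Matrix (Fin N) (Fin N) ℂ}
    (hM : M.IsHermitian) : (bohrRestrict lam ω0 M)ᴴ = bohrRestrict lam (-ω0) M := by
  ext i j
  simp only [bohrRestrict, conjTranspose_apply, of_apply, apply_ite star, star_zero,
    hM.apply i j]
  congr 1
  exact propext ⟨fun h => by linarith, fun h => by linarith⟩

theorem crossDissipator_bohrRestrict (lam : Fin N → ℝ) (α β : ℝ) {M : Matrix (Fin N) (Fin N) ℂ}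
    (hM : M.IsHermitian) (ρ : Matrix (Fin N) (Fin N) ℂ) :
    crossDissipator (bohrRestrict lam α M) (bohrRestrict lam β M) ρ
      = bohrRestrict lam α M * ρ * bohrRestrict lam (-β) M
        - (1 / 2 : ℂ) • (bohrRestrict lam (-β) M * 1 * bohrRestrict lam α M * ρ
          + ρ * (bohrRestrict lam (-β) M * 1 * bohrRestrict lam α M)) := by
  rw [crossDissipator, conjTranspose_bohrRestrict lam β hM, Matrix.mul_one]

theorem bohrRestrict_mul_mul_bohrRestrict_apply (lam : Fin N → ℝ) (α β : ℝ)
    (M Q : Matrix (Fin N) (Fin N) ℂ) (p q : Fin N) :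
    (bohrRestrict lam α M * Q * bohrRestrict lam β M) p q
      = ∑ a, ∑ b, (if lam p - lam a = α ∧ lam b - lam q = β then Q a b else 0)
          * (M p a * M b q) := by
  simp only [mul_apply, Finset.sum_mul]
  rw [Finset.sum_comm]
  refine Finset.sum_congr rfl fun a _ => Finset.sum_congr rfl fun b _ => ?_
  simp only [bohrRestrict, of_apply, ite_and, ite_mul, mul_ite, zero_mul, mul_zero]
  split_ifs <;> ring

section RandomMatrix

variable {Ω : Type*} [MeasurableSpace Ω] {μ : Measure Ω} {A : Ω → Matrix (Fin N) (Fin N) ℂ}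

theorem integrable_bohrRestrict_mul_mul_bohrRestrict
    (hint : ∀ i j k l : Fin N, Integrable (fun ω => A ω i j * A ω k l) μ)
    (lam : Fin N → ℝ) (α β : ℝ) (Q : Matrix (Fin N) (Fin N) ℂ) :
    Integrable (fun ω => bohrRestrict lam α (A ω) * Q * bohrRestrict lam β (A ω)) μ := by
  refine integrable_matrix_of_integrable_apply fun p q => ?_
  simp only [bohrRestrict_mul_mul_bohrRestrict_apply]
  exact integrable_finsetSum _ fun a _ => integrable_finsetSum _ fun b _ =>
    (hint p a b q).const_mul _

theorem integral_bohrRestrict_mul_mul_bohrRestrict_eq_zero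
    (hint : ∀ i j k l : Fin N, Integrable (fun ω => A ω i j * A ω k l) μ)
    (hzero : ∀ i j k l : Fin N, (i, j) ≠ (l, k) → ∫ ω, A ω i j * A ω k l ∂μ = 0)
    (lam : Fin N → ℝ) {α β : ℝ} (hαβ : α + β ≠ 0) (Q : Matrix (Fin N) (Fin N) ℂ) :
    ∫ ω, bohrRestrict lam α (A ω) * Q * bohrRestrict lam β (A ω) ∂μ = 0 := by
  ext p q
  rw [integral_matrix_apply (integrable_bohrRestrict_mul_mul_bohrRestrict hint lam α β Q)]
  simp only [bohrRestrict_mul_mul_bohrRestrict_apply, Matrix.zero_apply]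
  rw [integral_finsetSum _ fun a _ => integrable_finsetSum _ fun b _ =>
    (hint p a b q).const_mul _]
  refine Finset.sum_eq_zero fun a _ => ?_
  rw [integral_finsetSum _ fun b _ => (hint p a b q).const_mul _]
  refine Finset.sum_eq_zero fun b _ => ?_
  rw [integral_const_mul]
  split_ifs with hfreq
  · refine mul_eq_zero_of_right _ (hzero p a b q fun hdiag => hαβ ?_)
    obtain ⟨rfl, rfl⟩ := Prod.mk.inj hdiag
    linarith [hfreq.1, hfreq.2]
  · exact zero_mul _

theorem integrable_crossDissipator_bohrRestrict (hherm : ∀ ω, (A ω).IsHermitian)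
    (hint : ∀ i j k l : Fin N, Integrable (fun ω => A ω i j * A ω k l) μ)
    (lam : Fin N → ℝ) (α β : ℝ) (ρ : Matrix (Fin N) (Fin N) ℂ) :
    Integrable (fun ω => crossDissipator (bohrRestrict lam α (A ω)) (bohrRestrict lam β (A ω)) ρ)
      μ := by
  simp only [crossDissipator_bohrRestrict lam α β (hherm _)]
  have hback := integrable_bohrRestrict_mul_mul_bohrRestrict hint lam (-β) α 1
  exact (integrable_bohrRestrict_mul_mul_bohrRestrict hint lam α (-β) ρ).sub
    (((hback.matrix_mul_const ρ).fun_add (hback.const_matrix_mul ρ)).fun_smul _)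

theorem integral_crossDissipator_bohrRestrict_eq_zero (hherm : ∀ ω, (A ω).IsHermitian)
    (hint : ∀ i j k l : Fin N, Integrable (fun ω => A ω i j * A ω k l) μ)
    (hzero : ∀ i j k l : Fin N, (i, j) ≠ (l, k) → ∫ ω, A ω i j * A ω k l ∂μ = 0)
    (lam : Fin N → ℝ) {α β : ℝ} (hαβ : α ≠ β) (ρ : Matrix (Fin N) (Fin N) ℂ) :
    ∫ ω, crossDissipator (bohrRestrict lam α (A ω)) (bohrRestrict lam β (A ω)) ρ ∂μ = 0 := by
  simp only [crossDissipator_bohrRestrict lam α β (hherm _)]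
  have hfwd := integrable_bohrRestrict_mul_mul_bohrRestrict hint lam α (-β) ρ
  have hback := integrable_bohrRestrict_mul_mul_bohrRestrict hint lam (-β) α 1
  have hanticomm := (hback.matrix_mul_const ρ).fun_add (hback.const_matrix_mul ρ)
  rw [integral_sub hfwd (hanticomm.fun_smul _),
    integral_smul, integral_add (hback.matrix_mul_const ρ) (hback.const_matrix_mul ρ),
    integral_matrix_mul_const ρ hback, integral_const_matrix_mul ρ hback,
    integral_bohrRestrict_mul_mul_bohrRestrict_eq_zero hint hzero lam (by grind) ρ,
    integral_bohrRestrict_mul_mul_bohrRestrict_eq_zero hint hzero lam (by grind) 1]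
  simp

end RandomMatrix

theorem averaged_random_jump_is_davies_generator_general
    {Ω : Type*} [MeasurableSpace Ω] (μ : Measure Ω)
    (A : Ω → Matrix (Fin N) (Fin N) ℂ)
    (hherm : ∀ ω, (A ω).IsHermitian)
    (hint : ∀ i j k l : Fin N, Integrable (fun ω => A ω i j * A ω k l) μ)
    (hzero : ∀ i j k l : Fin N, (i, j) ≠ (l, k) → ∫ ω, A ω i j * A ω k l ∂μ = 0)
    (lam : Fin N → ℝ) (γ : ℝ → ℝ) (hγ : ∀ x, 0 ≤ γ x)
    (ρ : Matrix (Fin N) (Fin N) ℂ) :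
    ∫ ω, dissipator (weightedJump lam γ (A ω)) ρ ∂μ
      = ∑ ω0 ∈ Finset.image (fun p : Fin N × Fin N => lam p.1 - lam p.2) Finset.univ,
          (γ ω0 : ℂ) • ∫ ω, dissipator (bohrRestrict lam ω0 (A ω)) ρ ∂μ := by
  have hcross := integrable_crossDissipator_bohrRestrict hherm hint lam (ρ := ρ)
  simp only [weightedJump_eq_sum_bohrRestrict, dissipator_sum_smul]
  rw [integral_finsetSum _ fun α _ => integrable_finsetSum _ fun β _ => (hcross α β).fun_smul _]
  refine Finset.sum_congr rfl fun α hα => ?_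
  rw [integral_finsetSum _ fun β _ => (hcross α β).fun_smul _,
    Finset.sum_eq_single_of_mem α hα fun β _ hβα => by
      rw [integral_smul, integral_crossDissipator_bohrRestrict_eq_zero hherm hint hzero lam
        (Ne.symm hβα), smul_zero],
    integral_smul, ← Complex.ofReal_mul, Real.mul_self_sqrt (hγ α)]
  simp only [crossDissipator_self]

/-- For a random Hermitian `A` with `E[A_{ij}A_{kl}] = 0` for
`(i,j) ≠ (l,k)` and `E|A_{ij}|² = v²` for `i ≠ j`, and `K = ∑_ω √γ(ω) A(ω)`, the averaged
Lindbladian `E[ℒ_K]` equals the Davies generator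
`∑_ω γ(ω) E[A(ω) ρ A(ω)† − ½{A(ω)†A(ω), ρ}]`: cross-terms between distinct Bohr
frequencies vanish in expectation. -/
theorem averaged_random_jump_is_davies_generator
    {Ω : Type*} [MeasurableSpace Ω] (μ : Measure Ω) [IsProbabilityMeasure μ]
    (A : Ω → Matrix (Fin N) (Fin N) ℂ)
    (hherm : ∀ ω, (A ω).IsHermitian)
    (hint : ∀ i j k l : Fin N, Integrable (fun ω => A ω i j * A ω k l) μ)
    (hzero : ∀ i j k l : Fin N, (i, j) ≠ (l, k) → ∫ ω, A ω i j * A ω k l ∂μ = 0)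
    (v : ℝ) (hvar : ∀ i j : Fin N, i ≠ j → ∫ ω, ((‖A ω i j‖ : ℝ) : ℂ) ^ 2 ∂μ = (v : ℂ) ^ 2)
    (lam : Fin N → ℝ) (γ : ℝ → ℝ) (hγ : ∀ x, 0 ≤ γ x)
    (ρ : Matrix (Fin N) (Fin N) ℂ) :
    ∫ ω, dissipator (weightedJump lam γ (A ω)) ρ ∂μ
      = ∑ ω0 ∈ Finset.image (fun p : Fin N × Fin N => lam p.1 - lam p.2) Finset.univ,
          (γ ω0 : ℂ) • ∫ ω, dissipator (bohrRestrict lam ω0 (A ω)) ρ ∂μ :=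
  averaged_random_jump_is_davies_generator_general μ A hherm hint hzero lam γ hγ ρ
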